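/- Let 𝓑 be a q-Steiner system S(t,k,n;q) on E = F_q^n, let I be a (t+1)-dimensional subspace contained in no block, and let B be a block with dim(B ∩ I) = t. Then the maps D ↦ D ∩ B and X ↦ X + I are mutually inverse bijections between S(B,I) = {D ⊆ E : dim D = t+2, I ⊆ D, dim(B ∩ D) = t+1} and T(B,I) = {X ⊆ B : dim X = t+1, I ∩ B ⊆ X}; in particular |S(B,I)| = (q^{k−t} − 1)/(q − 1). -/

import Mathlib

/-!
Because `dim (B ∩ I) = t = dim I - 1`, every `X` with `I ∩ B ≤ X ≤ B` meets `I` exactly in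
`I ∩ B`, so `dim (X + I) = dim X + 1`, and the modular law gives `(X + I) ∩ B = X`; the same
dimension count gives `(D ∩ B) + I = D` for `D ∈ S(B,I)`. Hence `S(B,I) ≃ T(B,I)`, and
`T(B,I)` is in bijection with the lines of the `(k - t)`-dimensional space `B / (I ∩ B)`, of
which there are `1 + q + ⋯ + q^(k-t-1)`.
-/

/-- 𝓑 is a q-Steiner system S(t,k,n;q) on E = K^n. -/
def IsSteinerSystem {K : Type*} [Field K] [Fintype K] {n : ℕ}
    (t k : ℕ) (𝓑 : Set (Submodule K (Fin n → K))) : Prop :=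
  1 ≤ t ∧ t ≤ k ∧ k ≤ n ∧
  (∀ B ∈ 𝓑, Module.finrank K B = k) ∧
  (∀ T : Submodule K (Fin n → K), Module.finrank K T = t → ∃! B, B ∈ 𝓑 ∧ T ≤ B)

open Submodule Module

theorem sup_inf_eq_of_le_of_inf_le {α : Type*} [Lattice α] [IsModularLattice α] {a b c : α}
    (hac : a ≤ c) (hbc : b ⊓ c ≤ a) : (a ⊔ b) ⊓ c = a := by
  rw [sup_inf_assoc_of_le b hac, sup_eq_left.2 hbc]

theorem inf_eq_inf_of_inf_le_of_le {α : Type*} [Lattice α] {a b c : α}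
    (hbc : b ⊓ c ≤ a) (hac : a ≤ c) : a ⊓ b = c ⊓ b :=
  le_antisymm (inf_le_inf_right b hac) (le_inf (inf_comm c b ▸ hbc) inf_le_right)

section

variable {K V : Type*} [DivisionRing K] [AddCommGroup V] [Module K V] [FiniteDimensional K V]

theorem finrank_sup_eq_succ_of_inf_le_of_le {B I X : Submodule K V}
    (hI : finrank K I = finrank K ↥(B ⊓ I) + 1) (hIX : I ⊓ B ≤ X) (hXB : X ≤ B) :
    finrank K ↥(X ⊔ I) = finrank K X + 1 := by
  have h := finrank_sup_add_finrank_inf_eq X I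
  rw [inf_eq_inf_of_inf_le_of_le hIX hXB] at h
  omega

theorem finrank_comap_mkQ (p : Submodule K V) (L : Submodule K (V ⧸ p)) :
    finrank K (comap p.mkQ L) = finrank K p + finrank K L := by
  have h := LinearMap.finrank_range_add_finrank_ker (p.mkQ.domRestrict (comap p.mkQ L))
  rw [LinearMap.range_domRestrict, map_comap_eq_self (by simp), LinearMap.ker_domRestrict,
    ker_mkQ, (comapSubtypeEquivOfLe (le_comap_mkQ p L)).finrank_eq] at h
  omega

noncomputable def coversEquivLines (p : Submodule K V) :
    {X : Submodule K V // finrank K X = finrank K p + 1 ∧ p ≤ X} ≃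
      {L : Submodule K (V ⧸ p) // finrank K L = 1} where
  toFun X := ⟨map p.mkQ X, by
    have h := finrank_comap_mkQ p (map p.mkQ X)
    rw [comap_map_mkQ, sup_eq_right.2 X.2.2, X.2.1] at h
    omega⟩
  invFun L := ⟨comap p.mkQ L, by rw [finrank_comap_mkQ, L.2], le_comap_mkQ p L⟩
  left_inv X := Subtype.ext <| by simp only [comap_map_mkQ, sup_eq_right.2 X.2.2]
  right_inv L := Subtype.ext <| map_comap_eq_self (by simp)

noncomputable def coversBelowEquiv (B : Submodule K V) (p : Submodule K B) :
    {X : Submodule K V // X ≤ B ∧ finrank K X = finrank K p + 1 ∧ map B.subtype p ≤ X} ≃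
      {Y : Submodule K B // finrank K Y = finrank K p + 1 ∧ p ≤ Y} :=
  (Equiv.subtypeSubtypeEquivSubtypeInter (· ≤ B) _).symm.trans <|
    (Equiv.subtypeEquiv (MapSubtype.orderIso B).toEquiv fun Y => by
      change _ ↔ finrank K (map B.subtype Y) = _ ∧ map B.subtype p ≤ map B.subtype Y
      rw [finrank_map_subtype_eq, map_le_map_iff_of_injective B.injective_subtype]).symm

theorem card_covers_of_le [Finite K] {p B : Submodule K V} (hpB : p ≤ B) :
    Nat.card {X : Submodule K V // X ≤ B ∧ finrank K X = finrank K p + 1 ∧ p ≤ X} =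
      ∑ i ∈ Finset.range (finrank K B - finrank K p), Nat.card K ^ i := by
  obtain ⟨p, rfl⟩ : ∃ p' : Submodule K B, map B.subtype p' = p :=
    ⟨_, by rw [map_comap_subtype, inf_eq_right.2 hpB]⟩
  rw [finrank_map_subtype_eq, Nat.card_congr ((coversBelowEquiv B p).trans (coversEquivLines p)),
    ← Nat.card_congr (Projectivization.equivSubmodule K _)]
  refine Projectivization.card_of_finrank K _ ?_
  have h := p.finrank_quotient_add_finrank
  omega

end

theorem stmt15_general {K : Type*} [Field K] [Fintype K] {q n t k : ℕ}
    (hq : Fintype.card K = q)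
    (𝓑 : Set (Submodule K (Fin n → K))) (h𝓑 : IsSteinerSystem t k 𝓑)
    (I : Submodule K (Fin n → K)) (hI : Module.finrank K I = t + 1)
    (B : Submodule K (Fin n → K)) (hB : B ∈ 𝓑)
    (hBI : Module.finrank K ↥(B ⊓ I) = t) :
    let S : Set (Submodule K (Fin n → K)) :=
      {D | Module.finrank K D = t + 2 ∧ I ≤ D ∧ Module.finrank K ↥(B ⊓ D) = t + 1}
    let T : Set (Submodule K (Fin n → K)) :=
      {X | X ≤ B ∧ Module.finrank K X = t + 1 ∧ I ⊓ B ≤ X}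
    (∀ D ∈ S, D ⊓ B ∈ T) ∧
    (∀ X ∈ T, X ⊔ I ∈ S) ∧
    (∀ D ∈ S, (D ⊓ B) ⊔ I = D) ∧
    (∀ X ∈ T, (X ⊔ I) ⊓ B = X) ∧
    (Nat.card S : ℤ) * (q - 1) = (q : ℤ) ^ (k - t) - 1 := by
  intro S T
  have hI' : finrank K I = finrank K ↥(B ⊓ I) + 1 := by rw [hI, hBI]
  have mapsTo_T : ∀ D ∈ S, D ⊓ B ∈ T := fun D ⟨_, hID, hBD⟩ =>
    ⟨inf_le_right, by rwa [inf_comm], inf_le_inf_right B hID⟩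
  have inf_sup : ∀ X ∈ T, (X ⊔ I) ⊓ B = X := fun X ⟨hXB, _, hIX⟩ =>
    sup_inf_eq_of_le_of_inf_le hXB hIX
  have mapsTo_S : ∀ X ∈ T, X ⊔ I ∈ S := fun X hX =>
    ⟨by rw [finrank_sup_eq_succ_of_inf_le_of_le hI' hX.2.2 hX.1, hX.2.1], le_sup_right,
      by rw [inf_comm, inf_sup X hX, hX.2.1]⟩
  have sup_inf : ∀ D ∈ S, (D ⊓ B) ⊔ I = D := fun D ⟨hD, hID, hBD⟩ =>
    eq_of_le_of_finrank_eq (sup_le inf_le_left hID) <| by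
      rw [finrank_sup_eq_succ_of_inf_le_of_le hI' (inf_le_inf_right B hID) inf_le_right,
        inf_comm, hBD, hD]
  refine ⟨mapsTo_T, mapsTo_S, sup_inf, inf_sup, ?_⟩
  have hST : Nat.card S = Nat.card T :=
    Nat.card_congr <| Set.BijOn.equiv _ <|
      Set.InvOn.bijOn (f := (· ⊓ B)) (f' := (· ⊔ I)) ⟨sup_inf, inf_sup⟩ mapsTo_T mapsTo_S
  have hT : Nat.card T = ∑ i ∈ Finset.range (k - t), q ^ i := by
    have h := card_covers_of_le (inf_le_right : I ⊓ B ≤ B)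
    rw [show finrank K ↥(I ⊓ B) = t by rwa [inf_comm], h𝓑.2.2.2.1 B hB] at h
    rwa [← hq, Fintype.card_eq_nat_card]
  rw [hST, hT]
  push_cast
  exact geom_sum_mul _ _

/-- Let 𝓑 be a q-Steiner system S(t,k,n;q), I a (t+1)-dimensional
subspace contained in no block, B a block with dim(B ∩ I) = t.  Then
D ↦ D ∩ B and X ↦ X + I are mutually inverse bijections between
S(B,I) = {D : dim D = t+2, I ≤ D, dim(B ∩ D) = t+1} and
T(B,I) = {X ≤ B : dim X = t+1, I ∩ B ≤ X}; in particular
|S(B,I)| = (q^{k−t} − 1)/(q − 1). -/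
theorem stmt15 {K : Type*} [Field K] [Fintype K] {q n t k : ℕ}
    (hq : Fintype.card K = q)
    (𝓑 : Set (Submodule K (Fin n → K))) (h𝓑 : IsSteinerSystem t k 𝓑)
    (I : Submodule K (Fin n → K)) (hI : Module.finrank K I = t + 1)
    (hInoblock : ¬ ∃ B' ∈ 𝓑, I ≤ B')
    (B : Submodule K (Fin n → K)) (hB : B ∈ 𝓑)
    (hBI : Module.finrank K ↥(B ⊓ I) = t) :
    let S : Set (Submodule K (Fin n → K)) :=
      {D | Module.finrank K D = t + 2 ∧ I ≤ D ∧ Module.finrank K ↥(B ⊓ D) = t + 1}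
    let T : Set (Submodule K (Fin n → K)) :=
      {X | X ≤ B ∧ Module.finrank K X = t + 1 ∧ I ⊓ B ≤ X}
    (∀ D ∈ S, D ⊓ B ∈ T) ∧
    (∀ X ∈ T, X ⊔ I ∈ S) ∧
    (∀ D ∈ S, (D ⊓ B) ⊔ I = D) ∧
    (∀ X ∈ T, (X ⊔ I) ⊓ B = X) ∧
    (Nat.card S : ℤ) * (q - 1) = (q : ℤ) ^ (k - t) - 1 :=
  stmt15_general hq 𝓑 h𝓑 I hI B hB hBI
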